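/- Let (Ω,μ) be a probability space, p ∈ L¹(μ) a probability density, and S ⊆ Ω measurable with ∫_S p dμ > 0. Let p|_S = (χ_S p)/∫_S p dμ be the Bayesian conditional density. Then Γ(p|_S) = Γ(p)|_{π χ_S}; that is, quantum conditioning of Γ(p) by the effect π χ_S (multiplication by the indicator of S) agrees with the embedding of the classically conditioned density. -/

import Mathlib

open MeasureTheory

/- Both sides are the rank-one operator `g ↦ ⟨f, g⟩ f` up to scaling: since `√(χ_S p / c) = χ_S √p / √c`
for `c > 0`, the left-hand side is that operator for `f = χ_S √p` divided by `(√c)² = c`. -/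

theorem Complex.ofReal_sqrt_indicator_div {Ω : Type*} (S : Set Ω) (p : Ω → ℝ) {c : ℝ}
    (hc : 0 ≤ c) (ω : Ω) :
    (Real.sqrt (S.indicator p ω / c) : ℂ) =
      S.indicator (fun y => (Real.sqrt (p y) : ℂ)) ω / (Real.sqrt c : ℂ) := by
  rw [Real.sqrt_div' _ hc, Complex.ofReal_div]
  by_cases hω : ω ∈ S <;> simp [hω]

theorem MeasureTheory.integral_conj_div_mul_div {Ω : Type*} [MeasurableSpace Ω] (μ : Measure Ω)
    (f g : Ω → ℂ) (r : ℝ) (ω : Ω) :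
    (∫ x, (starRingEnd ℂ) (f x / r) * g x ∂μ) * (f ω / r) =
      (∫ x, (starRingEnd ℂ) (f x) * g x ∂μ) * f ω / ((r * r : ℝ) : ℂ) := by
  simp only [map_div₀, Complex.conj_ofReal, div_mul_eq_mul_div, integral_div]
  rw [Complex.ofReal_mul, mul_div_assoc, div_div, mul_div_assoc]

theorem quantum_bayes_classical_compatibility_general
    {Ω : Type*} [MeasurableSpace Ω] (μ : Measure Ω)
    (p : Ω → ℝ)
    (S : Set Ω) (hpS : 0 < ∫ ω in S, p ω ∂μ) :
    ∀ g : Ω → ℂ, MemLp g 2 μ →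
      (fun ω => (∫ x, (starRingEnd ℂ)
            ((Real.sqrt (S.indicator p x / ∫ y in S, p y ∂μ) : ℂ)) * g x ∂μ) *
          (Real.sqrt (S.indicator p ω / ∫ y in S, p y ∂μ) : ℂ))
        =ᵐ[μ]
      (fun ω => ((∫ x, (starRingEnd ℂ)
            (S.indicator (fun y => (Real.sqrt (p y) : ℂ)) x) * g x ∂μ) *
          S.indicator (fun y => (Real.sqrt (p y) : ℂ)) ω) / ((∫ y in S, p y ∂μ : ℝ) : ℂ)) := by
  intro g _
  refine Filter.Eventually.of_forall fun ω => ?_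
  simp only [Complex.ofReal_sqrt_indicator_div S p hpS.le]
  rw [integral_conj_div_mul_div, Real.mul_self_sqrt hpS.le]

/-- Quantum conditioning of the pure state `Γ(p) = ⟨√p,·⟩√p` by the effect
`π χ_S` (multiplication by the indicator of `S`, which is a projection, hence its own square
root) agrees with the embedding of the Bayesian conditional density
`p|_S = (χ_S p)/∫_S p dμ`: i.e. `Γ(p|_S) = Γ(p)|_{π χ_S}`, as operators on `L²(μ)`.
Concretely, for every `g ∈ L²(μ)`,
`⟨√(p|_S), g⟩ √(p|_S) = (⟨χ_S √p, g⟩ χ_S √p) / tr`, where `tr = ∫_S p dμ = ‖χ_S √p‖²`. -/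
theorem quantum_bayes_classical_compatibility
    {Ω : Type*} [MeasurableSpace Ω] (μ : Measure Ω) [IsProbabilityMeasure μ]
    (p : Ω → ℝ) (hint : Integrable p μ) (hpos : ∀ᵐ ω ∂μ, 0 ≤ p ω)
    (hnorm : ∫ ω, p ω ∂μ = 1)
    (S : Set Ω) (hS : MeasurableSet S) (hpS : 0 < ∫ ω in S, p ω ∂μ) :
    ∀ g : Ω → ℂ, MemLp g 2 μ →
      (fun ω => (∫ x, (starRingEnd ℂ)
            ((Real.sqrt (S.indicator p x / ∫ y in S, p y ∂μ) : ℂ)) * g x ∂μ) *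
          (Real.sqrt (S.indicator p ω / ∫ y in S, p y ∂μ) : ℂ))
        =ᵐ[μ]
      (fun ω => ((∫ x, (starRingEnd ℂ)
            (S.indicator (fun y => (Real.sqrt (p y) : ℂ)) x) * g x ∂μ) *
          S.indicator (fun y => (Real.sqrt (p y) : ℂ)) ω) / ((∫ y in S, p y ∂μ : ℝ) : ℂ)) :=
  quantum_bayes_classical_compatibility_general μ p S hpS
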